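/- For the configuration A₂(m) in ℂ², the polynomial q₃(x,y) = x⁴y − (1/5)(2m−3)(2m+1)y⁵ is quasi-invariant, and for m = 2 it factors as q₃ = −(1/3)p₁p₂ where p₁ = x² + y² and p₂ = (2m−1)y³ − 3x²y; hence for m = 2 it lies in the ideal generated by the deformed invariants p₁, p₂. -/
import Mathlib


open MvPolynomial

/-- Evaluation at the point `(x, y) ∈ ℂ²`, as a linear map on polynomials. -/
noncomputable def evalAt (x y : ℂ) : MvPolynomial (Fin 2) ℂ →ₗ[ℂ] ℂ :=
  (MvPolynomial.aeval ![x, y]).toLinearMap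

/-- The directional derivative `a·∂_x + b·∂_y` on polynomials in two variables. -/
noncomputable def dirD (a b : ℂ) : Module.End ℂ (MvPolynomial (Fin 2) ℂ) :=
  a • (MvPolynomial.pderiv 0).toLinearMap + b • (MvPolynomial.pderiv 1).toLinearMap

/-- The submodule of quasi-invariants of the configuration `A₂(m)` realized in `ℂ²`: the vector
`e₁` (line `x = 0`) carries multiplicity `m`, and the vectors `e₁ ± η·e₂` (lines `x ± ηy = 0`)
multiplicity `1`, where `η² = 2m+1`. A polynomial `q` is quasi-invariant if the odd normal
derivatives `∂_α^{2r-1} q`, `r = 1,...,m_α`, vanish on each line. -/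
noncomputable def quasiA (m : ℕ) (η : ℂ) : Submodule ℂ (MvPolynomial (Fin 2) ℂ) :=
  (⨅ r ∈ Finset.Icc 1 m, ⨅ y : ℂ,
    LinearMap.ker ((evalAt 0 y).comp ((dirD 1 0 ^ (2 * r - 1) : Module.End ℂ _) :
      MvPolynomial (Fin 2) ℂ →ₗ[ℂ] MvPolynomial (Fin 2) ℂ))) ⊓
  (⨅ t : ℂ, LinearMap.ker ((evalAt (-(η * t)) t).comp (dirD 1 η))) ⊓
  (⨅ t : ℂ, LinearMap.ker ((evalAt (η * t) t).comp (dirD 1 (-η))))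

lemma pderiv_num (i : Fin 2) (n : ℕ) [n.AtLeastTwo] :
    pderiv i (OfNat.ofNat n : MvPolynomial (Fin 2) ℂ) = 0 := by
  rw [← map_ofNat (C : ℂ →+* MvPolynomial (Fin 2) ℂ) n, pderiv_C]

lemma dirD_apply (a b : ℂ) (p : MvPolynomial (Fin 2) ℂ) :
    dirD a b p = C a * pderiv 0 p + C b * pderiv 1 p := by
  simp [dirD, smul_eq_C_mul]

noncomputable abbrev q3aux (m : ℕ) : MvPolynomial (Fin 2) ℂ :=
  X 0 ^ 4 * X 1 - C ((1 / 5) * (2 * (m : ℂ) - 3) * (2 * (m : ℂ) + 1)) * X 1 ^ 5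

lemma q3_d1 (m : ℕ) : dirD 1 0 (q3aux m) = 4 * X 0 ^ 3 * X 1 := by
  rw [dirD_apply]
  simp [pderiv_mul, pderiv_X_self, pderiv_X, pderiv_pow, smul_eq_C_mul]
  ring

lemma q3_d3 (m : ℕ) : ((dirD 1 0)^3 : Module.End ℂ _) (q3aux m) = 24 * X 0 * X 1 := by
  rw [pow_succ, pow_succ, pow_one, Module.End.mul_apply, Module.End.mul_apply, q3_d1,
    dirD_apply, dirD_apply]
  simp [pderiv_mul, pderiv_X_self, pderiv_X, pderiv_pow, smul_eq_C_mul,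
    pderiv_num 0 3, pderiv_num 0 4, pderiv_num 1 3, pderiv_num 1 4]
  ring

lemma q3_d5 (m : ℕ) : ((dirD 1 0)^5 : Module.End ℂ _) (q3aux m) = 0 := by
  have h : ((dirD 1 0)^5 : Module.End ℂ _) (q3aux m)
      = ((dirD 1 0)^2 : Module.End ℂ _) (((dirD 1 0)^3 : Module.End ℂ _) (q3aux m)) := by
    rw [← Module.End.mul_apply, ← pow_add]
  rw [h, q3_d3, pow_two, Module.End.mul_apply, dirD_apply, dirD_apply]
  simp [pderiv_mul, pderiv_X_self, pderiv_X, smul_eq_C_mul,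
    pderiv_num 0 24, pderiv_num 1 24]

/-- The polynomial `q₃ = x⁴y - (1/5)(2m-3)(2m+1)y⁵` is quasi-invariant for `A₂(m)`; for `m = 2`
it equals `-(1/3)p₁p₂` with `p₁ = x² + y²`, `p₂ = (2m-1)y³ - 3x²y`, hence lies in the ideal
generated by the deformed invariants `p₁, p₂`. -/
theorem q3_quasiInvariant_and_m2_factorization (m : ℕ) (hm : 1 ≤ m) (η : ℂ)
    (hη : η ^ 2 = 2 * (m : ℂ) + 1) :
    (X 0 ^ 4 * X 1 - C ((1 / 5) * (2 * (m : ℂ) - 3) * (2 * (m : ℂ) + 1)) * X 1 ^ 5)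
      ∈ quasiA m η ∧
    (m = 2 →
      (X 0 ^ 4 * X 1 - C ((1 / 5) * (2 * (m : ℂ) - 3) * (2 * (m : ℂ) + 1)) * X 1 ^ 5 :
          MvPolynomial (Fin 2) ℂ) =
        -(C (1 / 3 : ℂ)) * (X 0 ^ 2 + X 1 ^ 2) *
          (C (2 * (m : ℂ) - 1) * X 1 ^ 3 - C 3 * X 0 ^ 2 * X 1) ∧
      (X 0 ^ 4 * X 1 - C ((1 / 5) * (2 * (m : ℂ) - 3) * (2 * (m : ℂ) + 1)) * X 1 ^ 5 :
          MvPolynomial (Fin 2) ℂ) ∈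
        Ideal.span {(X 0 ^ 2 + X 1 ^ 2 : MvPolynomial (Fin 2) ℂ),
          C (2 * (m : ℂ) - 1) * X 1 ^ 3 - C 3 * X 0 ^ 2 * X 1}) := by
  constructor
  · rw [quasiA]
    refine Submodule.mem_inf.2 ⟨Submodule.mem_inf.2 ⟨?_, ?_⟩, ?_⟩
    · rw [Submodule.mem_iInf]
      intro r
      rw [Submodule.mem_iInf]
      intro hr
      rw [Submodule.mem_iInf]
      intro y
      rw [LinearMap.mem_ker, LinearMap.comp_apply]
      match r with
      | 0 => simp at hr
      | 1 => rw [show 2 * 1 - 1 = 1 by norm_num, pow_one, q3_d1]; simp [evalAt]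
      | 2 => rw [show 2 * 2 - 1 = 3 by norm_num, q3_d3]; simp [evalAt]
      | (n + 3) =>
        rw [show 2 * (n + 3) - 1 = 2 * n + 5 from by omega, pow_add,
          Module.End.mul_apply, q3_d5, map_zero, map_zero]
    · rw [Submodule.mem_iInf]
      intro t
      rw [LinearMap.mem_ker, LinearMap.comp_apply, dirD_apply]
      simp [evalAt, pderiv_mul, pderiv_X_self, pderiv_X, pderiv_pow, smul_eq_C_mul]
      linear_combination (η * t^4 * (η^2 + 2*(m:ℂ) - 3)) * hη
    · rw [Submodule.mem_iInf]
      intro t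
      rw [LinearMap.mem_ker, LinearMap.comp_apply, dirD_apply]
      simp [evalAt, pderiv_mul, pderiv_X_self, pderiv_X, pderiv_pow, smul_eq_C_mul]
      linear_combination (-(η * t^4) * (η^2 + 2*(m:ℂ) - 3)) * hη
  · intro hm2
    subst hm2
    have hc : C ((1 / 5) * (2 * ((2:ℕ) : ℂ) - 3) * (2 * ((2:ℕ) : ℂ) + 1)) = (1 : MvPolynomial (Fin 2) ℂ) := by
      norm_num
    have hc2 : C (2 * ((2:ℕ) : ℂ) - 1) = (C 3 : MvPolynomial (Fin 2) ℂ) := by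
      norm_num
    have h3 : (C (1/3 : ℂ) : MvPolynomial (Fin 2) ℂ) * C 3 = 1 := by
      rw [← C_mul]; norm_num
    have key : (X 0 ^ 4 * X 1 - C ((1 / 5) * (2 * ((2:ℕ) : ℂ) - 3) * (2 * ((2:ℕ) : ℂ) + 1)) * X 1 ^ 5 :
          MvPolynomial (Fin 2) ℂ) =
        -(C (1 / 3 : ℂ)) * (X 0 ^ 2 + X 1 ^ 2) *
          (C (2 * ((2:ℕ) : ℂ) - 1) * X 1 ^ 3 - C 3 * X 0 ^ 2 * X 1) := by
      rw [hc, hc2]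
      linear_combination (X 1 ^ 5 - X 0 ^ 4 * X 1 : MvPolynomial (Fin 2) ℂ) * h3
    refine ⟨key, ?_⟩
    rw [key]
    exact Ideal.mul_mem_left _ _ (Ideal.subset_span (by simp))
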